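/- arXiv:2605.08571 — 2 statements merged into one kernel-verified Lean document; each statement's English description precedes it below -/
import Mathlib

section
/- Let λ₂ > 0, λ₁ ≥ 0, c ∈ ℝ, p₀ ∈ ℝ, and t ≥ 0. Define z = −c/(2λ₂) and the soft-thresholding operator S_τ(u) = sign(u)·max(|u| − τ, 0). Then the function g(q) = c·q + λ₁|q − p₀| + λ₂q² has a unique minimizer over the interval [0,t], given by q* = clip_{[0,t]}( p₀ + S_{λ₁/(2λ₂)}(z − p₀) ), where clip_{[0,t]}(x) = max(0, min(t, x)). -/
/-!
The objective `g` is strictly convex, and completing the square turns it into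
`2λ₂ ((q - z)² / 2 + τ |q - p₀|)` plus a constant, with `τ = λ₁ / (2λ₂)`. Soft-thresholding is
the proximal map of `τ |·|`, so `y = p₀ + S_τ(z - p₀)` is the global minimizer of `g`. For every
`q ∈ [0, t]` the clipped point `clip y` lies on the segment from `y` to `q`, and a strictly convex
function increases strictly along any segment leaving its minimizer.
-/

/-- The soft-thresholding operator `S_τ(u) = sign(u)·max(|u| − τ, 0)`. -/
noncomputable def softThresh (τ u : ℝ) : ℝ := Real.sign u * max (|u| - τ) 0

open Set

theorem StrictConvexOn.lt_of_isMinOn_of_mem_segment {E : Type*} [AddCommGroup E] [Module ℝ E]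
    {s : Set E} {f : E → ℝ} {x y z : E} (hf : StrictConvexOn ℝ s f) (hmin : IsMinOn f s x)
    (hx : x ∈ s) (hy : y ∈ s) (hz : z ∈ segment ℝ x y) (hzy : z ≠ y) : f z < f y := by
  have hxy : x ≠ y := by
    rintro rfl
    exact hzy (by simpa [segment_same] using hz)
  have hseg : ∀ w ∈ openSegment ℝ x y, f w < max (f x) (f y) :=
    fun w hw ↦ hf.lt_on_openSegment hx hy hxy hw
  have hxy_lt : f x < f y := by
    have hmid := midpoint_mem_openSegment (𝕜 := ℝ) x y
    have hle : f x ≤ f (midpoint ℝ x y) := hmin (hf.1.openSegment_subset hx hy hmid)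
    exact (lt_max_iff.1 (hle.trans_lt (hseg _ hmid))).resolve_left (lt_irrefl _)
  obtain rfl | hzx := eq_or_ne z x
  · exact hxy_lt
  · exact (hseg z (mem_openSegment_of_ne_left_right hzx.symm hzy.symm hz)).trans_eq
      (max_eq_right hxy_lt.le)

theorem max_min_mem_segment {a b y q : ℝ} (hq : q ∈ Icc a b) :
    max a (min b y) ∈ segment ℝ y q := by
  rw [segment_eq_uIcc, mem_uIcc]
  obtain ⟨hqa, hqb⟩ := hq
  rcases le_total y q with h | h
  · exact .inl ⟨le_max_of_le_right (le_min (h.trans hqb) le_rfl),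
      max_le hqa ((min_le_right _ _).trans h)⟩
  · exact .inr ⟨le_max_of_le_right (le_min hqb h), max_le (hqa.trans h) (min_le_right _ _)⟩

lemma softThresh_of_le {τ u : ℝ} (hτ : 0 ≤ τ) (h : τ ≤ u) : softThresh τ u = u - τ := by
  obtain rfl | hu := (hτ.trans h).eq_or_lt
  · simp [softThresh, le_antisymm h hτ]
  · rw [softThresh, Real.sign_of_pos hu, abs_of_pos hu, one_mul, max_eq_left (by linarith)]

lemma softThresh_of_le_neg {τ u : ℝ} (hτ : 0 ≤ τ) (h : u ≤ -τ) : softThresh τ u = u + τ := by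
  obtain rfl | hu := (h.trans (neg_nonpos.mpr hτ)).eq_or_lt
  · simp [softThresh, le_antisymm (neg_nonneg.mp h) hτ]
  · rw [softThresh, Real.sign_of_neg hu, abs_of_neg hu, max_eq_left (by linarith)]
    ring

lemma softThresh_of_abs_le {τ u : ℝ} (h : |u| ≤ τ) : softThresh τ u = 0 := by
  rw [softThresh, max_eq_right (by linarith), mul_zero]

theorem softThresh_isMinOn {τ : ℝ} (hτ : 0 ≤ τ) (u : ℝ) :
    IsMinOn (fun v ↦ (v - u) ^ 2 / 2 + τ * |v|) univ (softThresh τ u) := by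
  refine isMinOn_univ_iff.2 fun v ↦ ?_
  rcases le_total τ u with h | h
  · rw [softThresh_of_le hτ h, abs_of_nonneg (by linarith)]
    nlinarith [mul_le_mul_of_nonneg_left (le_abs_self v) hτ, sq_nonneg (v - u + τ)]
  rcases le_total u (-τ) with h' | h'
  · rw [softThresh_of_le_neg hτ h', abs_of_nonpos (by linarith)]
    nlinarith [mul_le_mul_of_nonneg_left (neg_abs_le v) hτ, sq_nonneg (v - u - τ)]
  · rw [softThresh_of_abs_le (abs_le.2 ⟨h', h⟩), abs_zero]
    have huv : u * v ≤ τ * |v| := by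
      calc u * v ≤ |u| * |v| := by rw [← abs_mul]; exact le_abs_self _
        _ ≤ τ * |v| := mul_le_mul_of_nonneg_right (abs_le.2 ⟨h', h⟩) (abs_nonneg v)
    nlinarith [sq_nonneg v]

theorem strictConvexOn_linear_add_abs_add_sq {c lam1 lam2 : ℝ} (p0 : ℝ) (hlam1 : 0 ≤ lam1)
    (hlam2 : 0 < lam2) :
    StrictConvexOn ℝ univ (fun q ↦ c * q + lam1 * |q - p0| + lam2 * q ^ 2) := by
  refine ⟨convex_univ, fun x _ y _ hxy a b ha hb hab ↦ ?_⟩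
  simp only [smul_eq_mul]
  have habs : |a * x + b * y - p0| ≤ a * |x - p0| + b * |y - p0| := by
    calc |a * x + b * y - p0| = |a * (x - p0) + b * (y - p0)| := by
          congr 1; linear_combination p0 * hab
      _ ≤ a * |x - p0| + b * |y - p0| := by
          grw [abs_add_le, abs_mul, abs_mul, abs_of_pos ha, abs_of_pos hb]
  have hsq : (a * x + b * y) ^ 2 < a * x ^ 2 + b * y ^ 2 := by
    have hvar : a * x ^ 2 + b * y ^ 2 - (a * x + b * y) ^ 2 = a * b * (x - y) ^ 2 := by
      linear_combination (-(a * x ^ 2 + b * y ^ 2)) * hab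
    have : 0 < a * b * (x - y) ^ 2 := by
      have := sub_ne_zero.2 hxy
      positivity
    linarith
  have hlin : c * (a * x + b * y) = a * (c * x) + b * (c * y) := by ring
  nlinarith [mul_le_mul_of_nonneg_left habs hlam1, mul_lt_mul_of_pos_left hsq hlam2]

theorem isMinOn_linear_add_abs_add_sq {c lam1 lam2 : ℝ} (p0 : ℝ) (hlam1 : 0 ≤ lam1)
    (hlam2 : 0 < lam2) :
    IsMinOn (fun q ↦ c * q + lam1 * |q - p0| + lam2 * q ^ 2) univ
      (p0 + softThresh (lam1 / (2 * lam2)) (-c / (2 * lam2) - p0)) := by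
  set τ := lam1 / (2 * lam2)
  set z := -c / (2 * lam2)
  have hobj : ∀ q, c * q + lam1 * |q - p0| + lam2 * q ^ 2 =
      2 * lam2 * ((q - p0 - (z - p0)) ^ 2 / 2 + τ * |q - p0|) - lam2 * z ^ 2 := by
    intro q
    simp only [z, τ]
    field_simp
    ring
  refine isMinOn_univ_iff.2 fun q ↦ ?_
  have hprox := isMinOn_univ_iff.1 (softThresh_isMinOn (τ := τ) (by positivity) (z - p0)) (q - p0)
  rw [hobj, hobj, add_sub_cancel_left]
  gcongr 2 * lam2 * ?_ - _

/-- **Closed-form coordinatewise solution of the BEACON weight subproblem.**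
For `λ₂ > 0`, `λ₁ ≥ 0`, `t ≥ 0`, with `z = −c/(2λ₂)`, the function
`g(q) = c·q + λ₁|q − p₀| + λ₂q²` has the unique minimizer over `[0,t]` given by
`q* = clip_{[0,t]}(p₀ + S_{λ₁/(2λ₂)}(z − p₀))`. -/
theorem beacon_weight_subproblem_closed_form
    (lam2 lam1 c p0 t : ℝ) (hlam2 : 0 < lam2) (hlam1 : 0 ≤ lam1) (ht : 0 ≤ t) :
    let g : ℝ → ℝ := fun q => c * q + lam1 * |q - p0| + lam2 * q ^ 2
    let z : ℝ := -c / (2 * lam2)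
    let qstar : ℝ := max 0 (min t (p0 + softThresh (lam1 / (2 * lam2)) (z - p0)))
    qstar ∈ Set.Icc 0 t ∧ (∀ q ∈ Set.Icc 0 t, g qstar ≤ g q) ∧
      (∀ q ∈ Set.Icc 0 t, q ≠ qstar → g qstar < g q) := by
  intro g z qstar
  have hlt : ∀ q ∈ Icc 0 t, q ≠ qstar → g qstar < g q := fun q hq hne ↦
    (strictConvexOn_linear_add_abs_add_sq p0 hlam1 hlam2).lt_of_isMinOn_of_mem_segment
      (isMinOn_linear_add_abs_add_sq p0 hlam1 hlam2) trivial trivial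
      (max_min_mem_segment hq) hne.symm
  refine ⟨⟨le_max_left _ _, max_le ht (min_le_left _ _)⟩, fun q hq ↦ ?_, hlt⟩
  obtain rfl | hne := eq_or_ne q qstar
  · exact le_rfl
  · exact (hlt q hq hne).le
end

section
/- Let n ≥ 1, v ∈ ℝⁿ, a ≤ b real numbers, and s a real number with n·a ≤ s ≤ n·b. Suppose μ ∈ ℝ satisfies Σ_{i=1}^{n} clip_{[a,b]}(v_i − μ) = s, where clip_{[a,b]}(x) = max(a, min(b, x)), and define q* ∈ ℝⁿ by q*_i = clip_{[a,b]}(v_i − μ). Then q* is the Euclidean projection of v onto the set C = { q ∈ ℝⁿ : a ≤ q_i ≤ b for all i, Σ_i q_i = s }; that is, q* ∈ C and ‖q* − v‖_2 ≤ ‖q − v‖_2 for all q ∈ C, with equality only when q = q*. -/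
/-- **Correctness of BEACON's box-and-sum projection.**
If `μ` satisfies `Σ_i clip_{[a,b]}(v_i − μ) = s` with `n·a ≤ s ≤ n·b`, then
`q*_i = clip_{[a,b]}(v_i − μ)` is the Euclidean projection of `v` onto
`C = {q : a ≤ q_i ≤ b, Σ_i q_i = s}`: it lies in `C` and minimizes the
Euclidean distance to `v`, with equality only at `q*`. -/
theorem clipped_shift_is_projection
    {n : ℕ} (hn : 1 ≤ n) (v : Fin n → ℝ) (a b s : ℝ) (hab : a ≤ b)
    (hsa : n * a ≤ s) (hsb : s ≤ n * b)
    (μ : ℝ) (hμ : ∑ i, max a (min b (v i - μ)) = s) :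
    let qstar : Fin n → ℝ := fun i => max a (min b (v i - μ))
    ((∀ i, qstar i ∈ Set.Icc a b) ∧ ∑ i, qstar i = s) ∧
    ∀ q : Fin n → ℝ, (∀ i, q i ∈ Set.Icc a b) → (∑ i, q i = s) →
      Real.sqrt (∑ i, (qstar i - v i) ^ 2) ≤ Real.sqrt (∑ i, (q i - v i) ^ 2) ∧
      (Real.sqrt (∑ i, (q i - v i) ^ 2) = Real.sqrt (∑ i, (qstar i - v i) ^ 2) →
        q = qstar) := by
  intro qstar
  have hmem : ∀ i, qstar i ∈ Set.Icc a b := by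
    intro i
    refine ⟨le_max_left _ _, max_le hab (min_le_left _ _)⟩
  refine ⟨⟨hmem, hμ⟩, ?_⟩
  intro q hq hqs
  -- pointwise obtuse-angle inequality
  have key : ∀ i, 0 ≤ (q i - qstar i) * (qstar i - (v i - μ)) := by
    intro i
    obtain ⟨h1, h2⟩ := hq i
    rcases le_total (v i - μ) a with h | h
    · have hq' : qstar i = a := by
        simp only [qstar]; rw [min_eq_right (h.trans hab), max_eq_left h]
      rw [hq']; nlinarith
    · rcases le_total b (v i - μ) with h' | h'
      · have hq' : qstar i = b := by
          simp only [qstar]; rw [min_eq_left h', max_eq_right hab]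
        rw [hq']; nlinarith
      · have hq' : qstar i = v i - μ := by
          simp only [qstar]; rw [min_eq_right h', max_eq_right h]
        rw [hq']; nlinarith
  have hcross : 0 ≤ ∑ i, (q i - qstar i) * (qstar i - v i) := by
    have h1 : 0 ≤ ∑ i, (q i - qstar i) * (qstar i - (v i - μ)) :=
      Finset.sum_nonneg fun i _ => key i
    have h2 : ∑ i, (q i - qstar i) * (qstar i - (v i - μ))
        = ∑ i, (q i - qstar i) * (qstar i - v i) + μ * (∑ i, q i - ∑ i, qstar i) := by
      rw [← Finset.sum_sub_distrib, Finset.mul_sum, ← Finset.sum_add_distrib]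
      apply Finset.sum_congr rfl
      intro i _; ring
    rw [h2, hqs, hμ] at h1
    simpa using h1
  have hD : 0 ≤ ∑ i, (q i - qstar i) ^ 2 :=
    Finset.sum_nonneg fun i _ => sq_nonneg _
  have hdecomp : ∑ i, (q i - v i) ^ 2
      = ∑ i, (qstar i - v i) ^ 2 + 2 * ∑ i, (q i - qstar i) * (qstar i - v i)
        + ∑ i, (q i - qstar i) ^ 2 := by
    rw [Finset.mul_sum, ← Finset.sum_add_distrib, ← Finset.sum_add_distrib]
    apply Finset.sum_congr rfl
    intro i _; ring
  have hAB : ∑ i, (qstar i - v i) ^ 2 + ∑ i, (q i - qstar i) ^ 2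
      ≤ ∑ i, (q i - v i) ^ 2 := by linarith
  have hA : 0 ≤ ∑ i, (qstar i - v i) ^ 2 :=
    Finset.sum_nonneg fun i _ => sq_nonneg _
  constructor
  · exact Real.sqrt_le_sqrt (by linarith)
  · intro heq
    have hB : 0 ≤ ∑ i, (q i - v i) ^ 2 :=
      Finset.sum_nonneg fun i _ => sq_nonneg _
    have hBA : ∑ i, (q i - v i) ^ 2 = ∑ i, (qstar i - v i) ^ 2 :=
      (Real.sqrt_inj hB hA).mp heq
    have hD0 : ∑ i, (q i - qstar i) ^ 2 = 0 := le_antisymm (by linarith) hD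
    funext i
    have := (Finset.sum_eq_zero_iff_of_nonneg
      (fun i _ => sq_nonneg (q i - qstar i))).mp hD0 i (Finset.mem_univ i)
    have := pow_eq_zero_iff (n := 2) (by norm_num) |>.mp this
    linarith [sub_eq_zero.mp this]
end
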